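/- A residue a modulo m is regular if and only if the equivalence (a^k ≡ a^l (mod m) ⟺ k ≡ l (mod |a|_m)) holds for all positive integers k, l. -/

import Mathlib

/-- `e` is an idempotent residue modulo `m`: `e^2 ≡ e (mod m)`. -/
def Idem (m : ℕ) (e : ZMod m) : Prop := e ^ 2 = e

/-- The order `|a|_m`: the least `n ≥ 1` such that `a^n` is idempotent mod `m`. -/
noncomputable def ord (m : ℕ) (a : ZMod m) : ℕ := sInf {n | 1 ≤ n ∧ Idem m (a ^ n)}

/-- `a` is regular modulo `m`: `a^(|a|_m + 1) ≡ a (mod m)`. -/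
noncomputable def Reg (m : ℕ) (a : ZMod m) : Prop := a ^ (ord m a + 1) = a

/-- `R_m^e`: the regular residues mod `m` whose idempotent power is `e`. -/
noncomputable def Rme (m : ℕ) (e : ZMod m) : Set (ZMod m) :=
  {a | Reg m a ∧ a ^ (ord m a) = e}

/-- The orbit of `a` modulo `m`: `{a^j mod m : 1 ≤ j ≤ |a|_m}`. -/
noncomputable def orb (m : ℕ) (a : ZMod m) : Finset (ZMod m) :=
  (Finset.Icc 1 (ord m a)).image (a ^ ·)

/-!
The powers `a, a², a³, …` are the orbit of `a` under left multiplication `x ↦ a * x`, and `a` is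
regular exactly when `a` is a periodic point of this map of period `|a|_m`. In that case the
minimal period `p` divides `|a|_m`, while `a^p` is idempotent, so `p = |a|_m`; and two iterates of a
periodic point agree exactly when their indices are congruent modulo the minimal period.
-/

open Function

theorem Function.exists_isPeriodicPt_iterate {α : Type*} [Finite α] (f : α → α) (x : α) :
    ∃ i c, 0 < c ∧ IsPeriodicPt f c (f^[i] x) := by
  obtain ⟨i, j, hne, hij⟩ := Finite.exists_ne_map_eq_of_infinite (f^[·] x)
  wlog hlt : i < j generalizing i j
  · exact this j i hne.symm hij.symm (hne.symm.lt_of_le (not_lt.1 hlt))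
  obtain ⟨c, rfl⟩ := Nat.exists_eq_add_of_lt hlt
  refine ⟨i, c + 1, c.succ_pos, ?_⟩
  rw [IsPeriodicPt, IsFixedPt, ← iterate_add_apply, add_comm]
  exact hij.symm

theorem Function.iterate_eq_iterate_iff_modEq {α : Type*} {f : α → α} {x : α}
    (hx : x ∈ periodicPts f) {m n : ℕ} : f^[m] x = f^[n] x ↔ m ≡ n [MOD minimalPeriod f x] := by
  have hpos := minimalPeriod_pos_of_mem_periodicPts hx
  rw [← iterate_mod_minimalPeriod_eq, ← iterate_mod_minimalPeriod_eq (n := n),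
    iterate_eq_iterate_iff_of_lt_minimalPeriod (Nat.mod_lt _ hpos) (Nat.mod_lt _ hpos)]
  rfl

section Monoid

variable {M : Type*} [Monoid M] (a : M)

theorem pow_add_eq_mul_left_iterate (j r : ℕ) : a ^ (j + r) = (a * ·)^[r] (a ^ j) := by
  rw [mul_left_iterate_apply, pow_add, (Commute.pow_pow_self a j r).eq]

theorem isPeriodicPt_mul_left_pow_iff {n j : ℕ} :
    IsPeriodicPt (a * ·) n (a ^ j) ↔ a ^ (j + n) = a ^ j := by
  rw [pow_add_eq_mul_left_iterate]; rfl

theorem isIdempotentElem_pow_of_isPeriodicPt {j n : ℕ} (hjn : j ≤ n)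
    (h : IsPeriodicPt (a * ·) n (a ^ j)) : IsIdempotentElem (a ^ n) := by
  obtain ⟨r, rfl⟩ := Nat.exists_eq_add_of_le hjn
  have := h.apply_iterate r
  rw [← pow_add_eq_mul_left_iterate, isPeriodicPt_mul_left_pow_iff] at this
  rw [IsIdempotentElem, ← pow_add, this]

theorem exists_isIdempotentElem_pow [Finite M] : ∃ n, 0 < n ∧ IsIdempotentElem (a ^ n) := by
  obtain ⟨i, c, hc, h⟩ := exists_isPeriodicPt_iterate (a * ·) 1
  rw [← pow_zero a, ← pow_add_eq_mul_left_iterate, zero_add] at h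
  refine ⟨c * (i + 1), by positivity,
    isIdempotentElem_pow_of_isPeriodicPt a ?_ (h.mul_const (i + 1))⟩
  nlinarith

theorem pow_eq_pow_iff_modEq_minimalPeriod (ha : a ∈ periodicPts (a * ·)) {k l : ℕ}
    (hk : 1 ≤ k) (hl : 1 ≤ l) : a ^ k = a ^ l ↔ k ≡ l [MOD minimalPeriod (a * ·) a] := by
  obtain ⟨k, rfl⟩ := Nat.exists_eq_add_of_le' hk
  obtain ⟨l, rfl⟩ := Nat.exists_eq_add_of_le' hl
  rw [add_comm k, add_comm l, pow_add_eq_mul_left_iterate, pow_add_eq_mul_left_iterate, pow_one,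
    iterate_eq_iterate_iff_modEq ha, Nat.ModEq.add_iff_left rfl]

end Monoid

theorem idem_iff_isIdempotentElem {m : ℕ} {e : ZMod m} : Idem m e ↔ IsIdempotentElem e := by
  rw [Idem, IsIdempotentElem, sq]

theorem one_le_ord (m : ℕ) [NeZero m] (a : ZMod m) : 1 ≤ ord m a := by
  obtain ⟨n, hn, he⟩ := exists_isIdempotentElem_pow a
  exact (Nat.sInf_mem (s := {n | 1 ≤ n ∧ Idem m (a ^ n)})
    ⟨n, hn, idem_iff_isIdempotentElem.2 he⟩).1

theorem ord_le {m n : ℕ} {a : ZMod m} (hn : 1 ≤ n) (h : IsIdempotentElem (a ^ n)) :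
    ord m a ≤ n :=
  Nat.sInf_le (show n ∈ {n | 1 ≤ n ∧ Idem m (a ^ n)} from ⟨hn, idem_iff_isIdempotentElem.2 h⟩)

theorem Reg.isPeriodicPt {m : ℕ} {a : ZMod m} (h : Reg m a) :
    IsPeriodicPt (a * ·) (ord m a) a := by
  rw [IsPeriodicPt, IsFixedPt, mul_left_iterate_apply, ← pow_succ]
  exact h

theorem Reg.mem_periodicPts {m : ℕ} [NeZero m] {a : ZMod m} (h : Reg m a) :
    a ∈ periodicPts (a * ·) :=
  ⟨ord m a, one_le_ord m a, h.isPeriodicPt⟩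

theorem Reg.minimalPeriod_eq_ord {m : ℕ} [NeZero m] {a : ZMod m} (h : Reg m a) :
    minimalPeriod (a * ·) a = ord m a := by
  have hord := one_le_ord m a
  have hpos := h.isPeriodicPt.minimalPeriod_pos hord
  refine (Nat.le_of_dvd hord h.isPeriodicPt.minimalPeriod_dvd).antisymm (ord_le hpos ?_)
  refine isIdempotentElem_pow_of_isPeriodicPt a hpos ?_
  rw [pow_one]
  exact isPeriodicPt_minimalPeriod _ _

/-- `a` is regular mod `m` iff `a^k ≡ a^l (mod m) ⟺ k ≡ l (mod |a|_m)` holds for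
all positive integers `k, l`. -/
theorem regular_iff_pow_eq_pow_iff (m : ℕ) (hm : 1 ≤ m) (a : ZMod m) :
    Reg m a ↔ ∀ k l : ℕ, 1 ≤ k → 1 ≤ l →
      (a ^ k = a ^ l ↔ k ≡ l [MOD ord m a]) := by
  have : NeZero m := ⟨by omega⟩
  refine ⟨fun hreg k l hk hl => ?_, fun h => ?_⟩
  · rw [← hreg.minimalPeriod_eq_ord]
    exact pow_eq_pow_iff_modEq_minimalPeriod a hreg.mem_periodicPts hk hl
  · rw [Reg, (h (ord m a + 1) 1 (by omega) le_rfl).2 (Nat.add_modEq_left), pow_one]
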